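/- arXiv:0811.4288 — 2 statements merged into one kernel-verified Lean document; each statement's English description precedes it below -/
import Mathlib

section
/- Let β be a Parry number with Parry polynomial n*_β of degree d_P. For every ε ∈ (0,1), if ν_ε denotes the number of roots of n*_β (counted with multiplicity) whose modulus lies outside the closed annulus 1−ε ≤ |z| ≤ (1−ε)^{-1}, then the proportion μ_ε = ν_ε/d_P satisfies μ_ε ≤ (2/(ε·d_P))·(Log ‖n*_β‖₁ − (1/2)·Log |n*_β(0)|). -/
open Polynomial

noncomputable section

/-- Iterates `T_β^j(1)` of the beta-transformation `T_β(x) = βx - ⌊βx⌋` at `1`. -/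
def Titer (β : ℝ) : ℕ → ℝ
  | 0 => 1
  | j + 1 => Int.fract (β * Titer β j)

/-- The digits `t_i = ⌊β · T_β^{i-1}(1)⌋` for `i ≥ 1` (junk value `0` at `i = 0`). -/
def tdigit (β : ℝ) : ℕ → ℤ
  | 0 => 0
  | i + 1 => ⌊β * Titer β i⌋

/-- The Parry polynomial of a simple Parry number with `d_β(1) = 0.t₁…t_m`. -/
def simpleParryPoly (β : ℝ) (m : ℕ) : Polynomial ℤ :=
  X ^ m - ∑ i ∈ Finset.Icc 1 m, C (tdigit β i) * X ^ (m - i)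

/-- The Parry polynomial of a non-simple Parry number with preperiod `m`, period `p+1`. -/
def nonsimpleParryPoly (β : ℝ) (m p : ℕ) : Polynomial ℤ :=
  X ^ (m + p + 1) - ∑ i ∈ Finset.Icc 1 (m + p + 1), C (tdigit β i) * X ^ (m + p + 1 - i)
    - X ^ m + ∑ i ∈ Finset.Icc 1 m, C (tdigit β i) * X ^ (m - i)

/-- `β` is a Parry number (non-integer, `> 1`, with eventually periodic digit sequence
`(t_i)`) and `P` is its Parry polynomial: either `β` is a simple Parry number with
`d_β(1) = 0.t₁…t_m` (`m` maximal with `t_m ≠ 0`), or `β` is a non-simple Parry number with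
minimal preperiod length `m ≥ 0` and minimal period length `p+1 ≥ 1`. -/
def IsParryPolyOf (β : ℝ) (P : Polynomial ℤ) : Prop :=
  1 < β ∧ (∀ n : ℤ, (n : ℝ) ≠ β) ∧
  ((∃ m : ℕ, 1 ≤ m ∧ tdigit β m ≠ 0 ∧ (∀ i, m < i → tdigit β i = 0) ∧
      P = simpleParryPoly β m) ∨
   ((∀ N : ℕ, ∃ i, N < i ∧ tdigit β i ≠ 0) ∧
    ∃ m p : ℕ,
      (∀ i, m + 1 ≤ i → tdigit β (i + (p + 1)) = tdigit β i) ∧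
      (∀ q : ℕ, 0 < q → (∃ m', ∀ i, m' + 1 ≤ i → tdigit β (i + q) = tdigit β i) →
        p + 1 ≤ q) ∧
      (∀ m', m' < m → ¬ (∀ i, m' + 1 ≤ i → tdigit β (i + (p + 1)) = tdigit β i)) ∧
      P = nonsimpleParryPoly β m p))

/-- The 1-norm (length) of an integer polynomial. -/
def polyNorm1 (P : Polynomial ℤ) : ℝ :=
  ∑ j ∈ Finset.range (P.natDegree + 1), |(P.coeff j : ℝ)|

/-- Number of roots of `P` in `ℂ` (counted with multiplicity) lying outside the closed
annulus `1 - ε ≤ |z| ≤ (1 - ε)⁻¹`. -/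
def outCount (P : Polynomial ℤ) (ε : ℝ) : ℕ :=
  Multiset.card (@Multiset.filter ℂ
    (fun z => ‖z‖ < 1 - ε ∨ (1 - ε)⁻¹ < ‖z‖)
    (Classical.decPred _) ((P.map (Int.castRingHom ℂ)).roots))

def Complex.abs : AbsoluteValue ℂ ℝ := NormedField.toAbsoluteValue ℂ

@[simp] theorem Complex.abs_apply (z : ℂ) : Complex.abs z = ‖z‖ := rfl

theorem Complex.abs_exp (z : ℂ) : Complex.abs (Complex.exp z) = Real.exp z.re :=
  Complex.norm_exp z

theorem Complex.abs_conj (z : ℂ) : Complex.abs ((starRingEnd ℂ) z) = Complex.abs z :=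
  Complex.norm_conj z

theorem Complex.abs_intCast (n : ℤ) : Complex.abs (n : ℂ) = |(n : ℝ)| :=
  Complex.norm_intCast n

theorem Complex.normSq_eq_abs (z : ℂ) : Complex.normSq z = Complex.abs z ^ 2 :=
  Complex.normSq_eq_norm_sq z

lemma abs_coeff_le_of_circle (Q : Polynomial ℂ) (M : ℝ)
    (hM : ∀ w : ℂ, Complex.abs w = 1 → Complex.abs (Q.eval w) ≤ M) (k : ℕ) :
    Complex.abs (Q.coeff k) ≤ M := by
  set N := max (Q.natDegree + 1) (k + 1) with hNdef
  have hN0 : 0 < N := lt_of_lt_of_le (Nat.succ_pos _) (le_max_left _ _)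
  have hdeg : Q.natDegree < N := lt_of_lt_of_le (Nat.lt_succ_self _) (le_max_left _ _)
  have hkN : k < N := lt_of_lt_of_le (Nat.lt_succ_self _) (le_max_right _ _)
  set ζ : ℂ := Complex.exp (2 * Real.pi * Complex.I / N) with hζdef
  have hζ : IsPrimitiveRoot ζ N := Complex.isPrimitiveRoot_exp N hN0.ne'
  have hζabs : Complex.abs ζ = 1 := by
    rw [hζdef, Complex.abs_exp]
    have : (2 * Real.pi * Complex.I / N).re = 0 := by
      simp [Complex.div_re]
    rw [this, Real.exp_zero]
  have habs_pow : ∀ i : ℕ, Complex.abs (ζ ^ i) = 1 := by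
    intro i; rw [map_pow, hζabs, one_pow]
  have hζN : ζ ^ N = 1 := hζ.pow_eq_one
  have key : ∑ i ∈ Finset.range N, Q.eval (ζ ^ i) * ((ζ ^ k)⁻¹) ^ i
      = (N : ℂ) * Q.coeff k := by
    have heval : ∀ i : ℕ, Q.eval (ζ ^ i) = ∑ j ∈ Finset.range N, Q.coeff j * (ζ ^ i) ^ j :=
      fun i => Polynomial.eval_eq_sum_range' hdeg _
    calc ∑ i ∈ Finset.range N, Q.eval (ζ ^ i) * ((ζ ^ k)⁻¹) ^ i
        = ∑ i ∈ Finset.range N, ∑ j ∈ Finset.range N,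
            Q.coeff j * (ζ ^ j * (ζ ^ k)⁻¹) ^ i := by
          refine Finset.sum_congr rfl fun i _ => ?_
          rw [heval i, Finset.sum_mul]
          refine Finset.sum_congr rfl fun j _ => ?_
          rw [mul_pow, mul_assoc, ← pow_mul, ← pow_mul, Nat.mul_comm i j]
      _ = ∑ j ∈ Finset.range N, Q.coeff j * ∑ i ∈ Finset.range N, (ζ ^ j * (ζ ^ k)⁻¹) ^ i := by
          rw [Finset.sum_comm]
          exact Finset.sum_congr rfl fun j _ => (Finset.mul_sum _ _ _).symm
      _ = (N : ℂ) * Q.coeff k := by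
          rw [Finset.sum_eq_single k]
          · have hζ0 : ζ ≠ 0 := by
              intro h0; rw [h0] at hζabs; simp at hζabs
            have : ζ ^ k * (ζ ^ k)⁻¹ = 1 := mul_inv_cancel₀ (pow_ne_zero _ hζ0)
            rw [this]
            simp only [one_pow, Finset.sum_const, Finset.card_range, nsmul_eq_mul, mul_one]
            ring
          · intro j hj hjk
            have hx1 : ζ ^ j * (ζ ^ k)⁻¹ ≠ 1 := by
              intro h
              apply hjk
              have hζ0 : ζ ≠ 0 := by
                intro h0; rw [h0] at hζabs; simp at hζabs
              have hk0 : ζ ^ k ≠ 0 := pow_ne_zero _ hζ0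
              have : ζ ^ j = ζ ^ k := by
                have h2 := congrArg (· * ζ ^ k) h
                simp only [mul_assoc, inv_mul_cancel₀ hk0, mul_one, one_mul] at h2
                exact h2
              exact hζ.pow_inj (Finset.mem_range.mp hj) hkN this
            have hxN : (ζ ^ j * (ζ ^ k)⁻¹) ^ N = 1 := by
              have h1 : (ζ ^ j) ^ N = 1 := by
                rw [← pow_mul, mul_comm, pow_mul, hζN, one_pow]
              have h2 : ((ζ ^ k)⁻¹) ^ N = 1 := by
                rw [inv_pow, ← pow_mul, mul_comm, pow_mul, hζN, one_pow, inv_one]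
              rw [mul_pow, h1, h2, one_mul]
            rw [geom_sum_eq hx1, hxN, sub_self, zero_div, mul_zero]
          · intro h; exact absurd (Finset.mem_range.mpr hkN) h
  have hb : (N : ℝ) * Complex.abs (Q.coeff k) ≤ (N : ℝ) * M := by
    have : (N : ℝ) * Complex.abs (Q.coeff k) = Complex.abs ((N : ℂ) * Q.coeff k) := by
      rw [map_mul]; simp
    rw [this, ← key]
    calc Complex.abs (∑ i ∈ Finset.range N, Q.eval (ζ ^ i) * ((ζ ^ k)⁻¹) ^ i)
        ≤ ∑ i ∈ Finset.range N, Complex.abs (Q.eval (ζ ^ i) * ((ζ ^ k)⁻¹) ^ i) := by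
          exact Complex.abs.sum_le _ _
      _ ≤ ∑ i ∈ Finset.range N, M := by
          refine Finset.sum_le_sum fun i _ => ?_
          rw [map_mul]
          have h2 : Complex.abs (((ζ ^ k)⁻¹) ^ i) = 1 := by
            rw [map_pow, map_inv₀, habs_pow k, inv_one, one_pow]
          rw [h2, mul_one]
          exact hM _ (habs_pow i)
      _ = (N : ℝ) * M := by rw [Finset.sum_const, Finset.card_range, nsmul_eq_mul]
  have hNpos : (0:ℝ) < N := by exact_mod_cast hN0
  exact le_of_mul_le_mul_left (by linarith [hb]) hNpos

lemma eval_circle_le_polyNorm1 (P : Polynomial ℤ) (w : ℂ) (hw : Complex.abs w = 1) :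
    Complex.abs ((P.map (Int.castRingHom ℂ)).eval w) ≤ polyNorm1 P := by
  set Pc := P.map (Int.castRingHom ℂ) with hPc
  have hdeg : Pc.natDegree < P.natDegree + 1 :=
    Nat.lt_succ_of_le Polynomial.natDegree_map_le
  rw [Polynomial.eval_eq_sum_range' hdeg]
  calc Complex.abs (∑ j ∈ Finset.range (P.natDegree + 1), Pc.coeff j * w ^ j)
      ≤ ∑ j ∈ Finset.range (P.natDegree + 1), Complex.abs (Pc.coeff j * w ^ j) :=
        Complex.abs.sum_le _ _
    _ = ∑ j ∈ Finset.range (P.natDegree + 1), |(P.coeff j : ℝ)| := by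
        refine Finset.sum_congr rfl fun j _ => ?_
        rw [map_mul, map_pow, hw, one_pow, mul_one, hPc, Polynomial.coeff_map]
        simp [Complex.abs_intCast]
    _ = polyNorm1 P := rfl

lemma mahler_le_polyNorm1 (P : Polynomial ℤ) (hm : P.Monic) :
    (((P.map (Int.castRingHom ℂ)).roots).map (fun z => max 1 (Complex.abs z))).prod
      ≤ polyNorm1 P := by
  set Pc := P.map (Int.castRingHom ℂ) with hPc
  have hmc : Pc.Monic := hm.map _
  have hcard : Multiset.card Pc.roots = Pc.natDegree :=
    (Polynomial.splits_iff_card_roots.mp (IsAlgClosed.splits Pc)).symm ▸ rfl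
  have hprod : (Pc.roots.map (fun z => X - C z)).prod = Pc :=
    Polynomial.prod_multiset_X_sub_C_of_monic_of_roots_card_eq hmc
      (Polynomial.splits_iff_card_roots.mp (IsAlgClosed.splits Pc))
  set g : ℂ → ℂ := fun z => if 1 < Complex.abs z then (starRingEnd ℂ) z else 1 with hg
  set h : ℂ → ℂ := fun z => if 1 < Complex.abs z then -1 else -z with hh
  set f : ℂ → Polynomial ℂ := fun z => C (g z) * X + C (h z) with hf
  have hg0 : ∀ z : ℂ, g z ≠ 0 := by
    intro z
    simp only [hg]
    split_ifs with h1
    · have hz : z ≠ 0 := by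
        intro h0; rw [h0] at h1; simp at h1; linarith
      intro hc
      apply hz
      have := congrArg (starRingEnd ℂ) hc
      simpa using this
    · exact one_ne_zero
  have hfl : ∀ z : ℂ, (f z).leadingCoeff = g z := fun z => Polynomial.leadingCoeff_linear (hg0 z)
  have hfd : ∀ z : ℂ, (f z).natDegree = 1 := fun z => Polynomial.natDegree_linear (hg0 z)
  set Q : Polynomial ℂ := (Pc.roots.map f).prod with hQ
  have hlcprod : ((Pc.roots.map f).map Polynomial.leadingCoeff).prod ≠ 0 := by
    rw [Multiset.map_map]
    apply Multiset.prod_ne_zero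
    intro hc
    rw [Multiset.mem_map] at hc
    obtain ⟨z, _, hz⟩ := hc
    exact hg0 z ((hfl z).symm.trans hz)
  have hQdeg : Q.natDegree = Multiset.card Pc.roots := by
    rw [hQ, Polynomial.natDegree_multiset_prod' _ hlcprod, Multiset.map_map]
    have : Multiset.map (Polynomial.natDegree ∘ f) Pc.roots
        = Multiset.map (fun _ => 1) Pc.roots :=
      Multiset.map_congr rfl fun z _ => hfd z
    rw [this]
    simp [Multiset.map_const']
  have hQlc : Complex.abs (Q.coeff Q.natDegree)
      = (Pc.roots.map (fun z => Complex.abs (g z))).prod := by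
    rw [← Polynomial.leadingCoeff, hQ,
      Polynomial.leadingCoeff_multiset_prod' _ hlcprod, Multiset.map_map]
    have : Multiset.map (Polynomial.leadingCoeff ∘ f) Pc.roots
        = Multiset.map g Pc.roots := Multiset.map_congr rfl fun z _ => hfl z
    rw [this, map_multiset_prod, Multiset.map_map]
    rfl
  have habsg : ∀ z : ℂ, Complex.abs (g z) = max 1 (Complex.abs z) := by
    intro z
    simp only [hg]
    split_ifs with h1
    · rw [Complex.abs_conj]; exact (max_eq_right h1.le).symm
    · rw [map_one]; exact (max_eq_left (not_lt.mp h1)).symm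
  have hcirc : ∀ w : ℂ, Complex.abs w = 1 → Complex.abs (Q.eval w) ≤ polyNorm1 P := by
    intro w hw
    have heq : Complex.abs (Q.eval w) = Complex.abs (Pc.eval w) := by
      conv_rhs => rw [← hprod]
      rw [hQ, Polynomial.eval_multiset_prod, Polynomial.eval_multiset_prod,
        map_multiset_prod, map_multiset_prod, Multiset.map_map, Multiset.map_map,
        Multiset.map_map, Multiset.map_map]
      refine congrArg Multiset.prod (Multiset.map_congr rfl fun z _ => ?_)
      simp only [Function.comp_apply, Polynomial.eval_add, Polynomial.eval_mul,
        Polynomial.eval_C, Polynomial.eval_X, Polynomial.eval_sub, hf]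
      simp only [hg, hh]
      split_ifs with h1
      · have hww : (starRingEnd ℂ) w * w = 1 := by
          rw [mul_comm, Complex.mul_conj]
          norm_cast
          rw [Complex.normSq_eq_abs, hw, one_pow]
        have : (starRingEnd ℂ) ((starRingEnd ℂ) z * w + -1)
            = (starRingEnd ℂ) w * (z - w) := by
          rw [map_add, map_mul, map_neg, map_one, Complex.conj_conj]
          ring_nf
          rw [hww]
          ring
        calc Complex.abs ((starRingEnd ℂ) z * w + -1)
            = Complex.abs ((starRingEnd ℂ) ((starRingEnd ℂ) z * w + -1)) :=
              (Complex.abs_conj _).symm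
          _ = Complex.abs ((starRingEnd ℂ) w) * Complex.abs (z - w) := by
              rw [this, map_mul]
          _ = Complex.abs (w - z) := by
              rw [Complex.abs_conj, hw, one_mul, Complex.abs.map_sub]
      · rw [one_mul, ← sub_eq_add_neg]
    rw [heq]
    exact eval_circle_le_polyNorm1 P w hw
  calc ((Pc.roots).map (fun z => max 1 (Complex.abs z))).prod
      = Complex.abs (Q.coeff Q.natDegree) := by
        rw [hQlc]
        exact congrArg Multiset.prod (Multiset.map_congr rfl fun z _ => (habsg z).symm)
    _ ≤ polyNorm1 P := abs_coeff_le_of_circle Q (polyNorm1 P) hcirc _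

lemma msprod_nonneg (s : Multiset ℝ) (h : ∀ x ∈ s, 0 ≤ x) : 0 ≤ s.prod := by
  induction s using Multiset.induction_on with
  | empty => simp
  | cons a s ih =>
    rw [Multiset.prod_cons]
    exact mul_nonneg (h a (Multiset.mem_cons_self a s))
      (ih fun x hx => h x (Multiset.mem_cons_of_mem hx))

lemma msprod_one_le (s : Multiset ℝ) (h : ∀ x ∈ s, 1 ≤ x) : 1 ≤ s.prod := by
  induction s using Multiset.induction_on with
  | empty => simp
  | cons a s ih =>
    rw [Multiset.prod_cons]
    have h1 := h a (Multiset.mem_cons_self a s)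
    have h2 := ih fun x hx => h x (Multiset.mem_cons_of_mem hx)
    nlinarith

lemma msprod_pow_le (s : Multiset ℝ) (r : ℝ) (hr : 0 ≤ r) (h : ∀ x ∈ s, r ≤ x) :
    r ^ (Multiset.card s) ≤ s.prod := by
  induction s using Multiset.induction_on with
  | empty => simp
  | cons a s ih =>
    rw [Multiset.prod_cons, Multiset.card_cons, pow_succ, mul_comm (r ^ Multiset.card s) r]
    have h1 := h a (Multiset.mem_cons_self a s)
    have h2 := ih fun x hx => h x (Multiset.mem_cons_of_mem hx)
    have : (0:ℝ) ≤ r ^ Multiset.card s := pow_nonneg hr _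
    nlinarith

lemma msprod_le_pow (s : Multiset ℝ) (r : ℝ) (h0 : ∀ x ∈ s, 0 ≤ x) (h : ∀ x ∈ s, x ≤ r) :
    s.prod ≤ r ^ (Multiset.card s) := by
  induction s using Multiset.induction_on with
  | empty => simp
  | cons a s ih =>
    rw [Multiset.prod_cons, Multiset.card_cons, pow_succ, mul_comm (r ^ Multiset.card s) r]
    have h1 := h a (Multiset.mem_cons_self a s)
    have h1' := h0 a (Multiset.mem_cons_self a s)
    have h2 := ih (fun x hx => h0 x (Multiset.mem_cons_of_mem hx))
      (fun x hx => h x (Multiset.mem_cons_of_mem hx))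
    have h3 : (0:ℝ) ≤ s.prod := msprod_nonneg s fun x hx => h0 x (Multiset.mem_cons_of_mem hx)
    nlinarith

lemma msprod_map_le (s : Multiset ℂ) (f g : ℂ → ℝ) (h0 : ∀ x ∈ s, 0 ≤ f x)
    (h : ∀ x ∈ s, f x ≤ g x) : (s.map f).prod ≤ (s.map g).prod := by
  induction s using Multiset.induction_on with
  | empty => simp
  | cons a s ih =>
    rw [Multiset.map_cons, Multiset.map_cons, Multiset.prod_cons, Multiset.prod_cons]
    have h1 := h a (Multiset.mem_cons_self a s)
    have h1' := h0 a (Multiset.mem_cons_self a s)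
    have h2 := ih (fun x hx => h0 x (Multiset.mem_cons_of_mem hx))
      (fun x hx => h x (Multiset.mem_cons_of_mem hx))
    have h3 : (0:ℝ) ≤ (s.map f).prod :=
      msprod_nonneg _ (by
        intro x hx
        obtain ⟨y, hy, rfl⟩ := Multiset.mem_map.mp hx
        exact h0 y (Multiset.mem_cons_of_mem hy))
    nlinarith

lemma filter_ext_dec {p : ℂ → Prop} (h1 h2 : DecidablePred p) (s : Multiset ℂ) :
    @Multiset.filter ℂ p h1 s = @Multiset.filter ℂ p h2 s := by
  rw [Subsingleton.elim h1 h2]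

lemma main_bound (P : Polynomial ℤ) (hm : P.Monic) (hd : 1 ≤ P.natDegree)
    (h0 : P.coeff 0 ≠ 0) (ε : ℝ) (hε : 0 < ε) (hε1 : ε < 1) :
    (outCount P ε : ℝ) / (P.natDegree : ℝ) ≤
      2 / (ε * (P.natDegree : ℝ)) *
        (Real.log (polyNorm1 P) - (1 / 2) * Real.log |((P.coeff 0 : ℤ) : ℝ)|) := by
  classical
  set Pc := P.map (Int.castRingHom ℂ) with hPc
  set R := Pc.roots with hR
  have hmc : Pc.Monic := hm.map _
  have hcardR : Multiset.card R = Pc.natDegree :=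
    Polynomial.splits_iff_card_roots.mp (IsAlgClosed.splits Pc)
  have hprodP : (R.map (fun z => X - C z)).prod = Pc :=
    Polynomial.prod_multiset_X_sub_C_of_monic_of_roots_card_eq hmc hcardR
  -- constant coefficient as product of root moduli
  have hc0 : |((P.coeff 0 : ℤ) : ℝ)| = (R.map Complex.abs).prod := by
    have h1 : Pc.coeff 0 = ((P.coeff 0 : ℤ) : ℂ) := by
      rw [hPc, Polynomial.coeff_map]; rfl
    have h2 : Pc.coeff 0 = Pc.eval 0 := (Polynomial.coeff_zero_eq_eval_zero Pc)
    have h3 : Pc.eval 0 = (R.map (fun z => -z)).prod := by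
      conv_lhs => rw [← hprodP]
      rw [Polynomial.eval_multiset_prod, Multiset.map_map]
      refine congrArg Multiset.prod (Multiset.map_congr rfl fun z _ => ?_)
      simp
    have : Complex.abs (Pc.coeff 0) = (R.map Complex.abs).prod := by
      rw [h2, h3, map_multiset_prod, Multiset.map_map]
      refine congrArg Multiset.prod (Multiset.map_congr rfl fun z _ => ?_)
      simp
    rw [← this, h1, Complex.abs_intCast]
  -- the Mahler bound
  have hLnorm : (R.map (fun z => max 1 (Complex.abs z))).prod ≤ polyNorm1 P :=
    mahler_le_polyNorm1 P hm
  have hmax1 : ∀ s : Multiset ℂ, 1 ≤ ((s.map (fun z => max 1 (Complex.abs z))).prod) := by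
    intro s
    refine msprod_one_le _ fun x hx => ?_
    obtain ⟨y, _, rfl⟩ := Multiset.mem_map.mp hx
    exact le_max_left _ _
  have hN1 : 1 ≤ polyNorm1 P := le_trans (hmax1 R) hLnorm
  have h1ε : 0 < 1 - ε := by linarith
  have hrpos : 0 < (1 - ε)⁻¹ := inv_pos.mpr h1ε
  have hrinv : (1 - ε) * (1 - ε)⁻¹ = 1 := mul_inv_cancel₀ (ne_of_gt h1ε)
  have hr1 : 1 < (1 - ε)⁻¹ := by nlinarith
  set A : ℂ → Prop := fun z => Complex.abs z < 1 - ε with hA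
  set B : ℂ → Prop := fun z => (1 - ε)⁻¹ < Complex.abs z with hB
  set k := Multiset.card (Multiset.filter B R) with hk
  set l := Multiset.card (Multiset.filter A R) with hl
  -- split of the Mahler product
  have hsplitB : (R.map (fun z => max 1 (Complex.abs z))).prod =
      ((Multiset.filter B R).map (fun z => max 1 (Complex.abs z))).prod *
      ((Multiset.filter (fun z => ¬ B z) R).map (fun z => max 1 (Complex.abs z))).prod := by
    conv_lhs => rw [← Multiset.filter_add_not B R]
    rw [Multiset.map_add, Multiset.prod_add]
  have hsplitA : (R.map (fun z => max 1 (Complex.abs z))).prod =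
      ((Multiset.filter A R).map (fun z => max 1 (Complex.abs z))).prod *
      ((Multiset.filter (fun z => ¬ A z) R).map (fun z => max 1 (Complex.abs z))).prod := by
    conv_lhs => rw [← Multiset.filter_add_not A R]
    rw [Multiset.map_add, Multiset.prod_add]
  -- step 1 : ((1-ε)⁻¹)^k ≤ polyNorm1
  have step1 : ((1 - ε)⁻¹) ^ k ≤ polyNorm1 P := by
    refine le_trans ?_ hLnorm
    rw [hsplitB]
    have hb1 : ((1 - ε)⁻¹) ^ k ≤
        ((Multiset.filter B R).map (fun z => max 1 (Complex.abs z))).prod := by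
      have := msprod_pow_le ((Multiset.filter B R).map (fun z => max 1 (Complex.abs z)))
        ((1 - ε)⁻¹) (le_of_lt hrpos) ?_
      · rwa [Multiset.card_map] at this
      · intro x hx
        obtain ⟨y, hy, rfl⟩ := Multiset.mem_map.mp hx
        have hBy : B y := Multiset.of_mem_filter hy
        exact le_trans (le_of_lt hBy) (le_max_right _ _)
    refine le_trans hb1 (le_mul_of_one_le_right ?_ (hmax1 _))
    exact le_trans zero_le_one (hmax1 _)
  -- step 2 : |P(0)| ≤ (1-ε)^l * polyNorm1
  have step2 : |((P.coeff 0 : ℤ) : ℝ)| ≤ (1 - ε) ^ l * polyNorm1 P := by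
    rw [hc0]
    conv_lhs => rw [← Multiset.filter_add_not A R]
    rw [Multiset.map_add, Multiset.prod_add]
    have habs0 : ∀ s : Multiset ℂ, (0:ℝ) ≤ (s.map Complex.abs).prod := by
      intro s
      refine msprod_nonneg _ fun x hx => ?_
      obtain ⟨y, _, rfl⟩ := Multiset.mem_map.mp hx
      exact AbsoluteValue.nonneg _ _
    have hA1 : ((Multiset.filter A R).map Complex.abs).prod ≤ (1 - ε) ^ l := by
      have := msprod_le_pow ((Multiset.filter A R).map Complex.abs) (1 - ε)
        ?_ ?_
      · rwa [Multiset.card_map] at this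
      · intro x hx
        obtain ⟨y, _, rfl⟩ := Multiset.mem_map.mp hx
        exact AbsoluteValue.nonneg _ _
      · intro x hx
        obtain ⟨y, hy, rfl⟩ := Multiset.mem_map.mp hx
        have h5 : A y := Multiset.of_mem_filter hy
        simp only [hA] at h5
        exact le_of_lt h5
    have hA2 : ((Multiset.filter (fun z => ¬ A z) R).map Complex.abs).prod ≤ polyNorm1 P := by
      have hstep : ((Multiset.filter (fun z => ¬ A z) R).map Complex.abs).prod ≤
          ((Multiset.filter (fun z => ¬ A z) R).map (fun z => max 1 (Complex.abs z))).prod :=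
        msprod_map_le _ _ _ (fun x _ => AbsoluteValue.nonneg _ _) (fun x _ => le_max_right _ _)
      refine le_trans hstep (le_trans ?_ hLnorm)
      rw [hsplitA]
      exact le_mul_of_one_le_left (le_trans zero_le_one (hmax1 _)) (hmax1 _)
    have := mul_le_mul hA1 hA2 (habs0 _) (by positivity)
    exact this
  -- logs
  set a := Real.log (polyNorm1 P) with ha
  set b := Real.log |((P.coeff 0 : ℤ) : ℝ)| with hb
  have ha0 : 0 ≤ a := Real.log_nonneg hN1
  have hone : (1:ℝ) ≤ |((P.coeff 0 : ℤ) : ℝ)| := by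
    have : (1:ℤ) ≤ |P.coeff 0| := Int.one_le_abs h0
    calc (1:ℝ) ≤ (|P.coeff 0| : ℝ) := by exact_mod_cast this
      _ = |((P.coeff 0 : ℤ) : ℝ)| := by push_cast; ring
  have hb0 : 0 ≤ b := Real.log_nonneg hone
  have hεlog : ε ≤ Real.log ((1 - ε)⁻¹) := by
    rw [Real.log_inv]
    have := Real.log_le_sub_one_of_pos h1ε
    linarith
  have hkε : (k:ℝ) * ε ≤ a := by
    have h1 : Real.log (((1 - ε)⁻¹) ^ k) ≤ a :=
      Real.log_le_log (pow_pos hrpos k) step1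
    rw [Real.log_pow] at h1
    calc (k:ℝ) * ε ≤ (k:ℝ) * Real.log ((1 - ε)⁻¹) := by
          exact mul_le_mul_of_nonneg_left hεlog (Nat.cast_nonneg k)
      _ ≤ a := h1
  have hlε : (l:ℝ) * ε ≤ a - b := by
    have hpos : (0:ℝ) < |((P.coeff 0 : ℤ) : ℝ)| := lt_of_lt_of_le one_pos hone
    have h1 : b ≤ Real.log ((1 - ε) ^ l * polyNorm1 P) :=
      Real.log_le_log hpos step2
    rw [Real.log_mul (by positivity) (by positivity), Real.log_pow] at h1
    have h2 : Real.log (1 - ε) ≤ -ε := by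
      have := Real.log_le_sub_one_of_pos h1ε
      linarith
    have h3 : (l:ℝ) * Real.log (1 - ε) ≤ (l:ℝ) * (-ε) :=
      mul_le_mul_of_nonneg_left h2 (Nat.cast_nonneg l)
    have : b ≤ (l:ℝ) * (-ε) + a := by
      calc b ≤ (l:ℝ) * Real.log (1 - ε) + a := h1
        _ ≤ (l:ℝ) * (-ε) + a := by linarith
    linarith
  -- the count
  have hcount : outCount P ε = l + k := by
    unfold outCount
    rw [filter_ext_dec (Classical.decPred _) inferInstance]
    have hsum := Multiset.filter_add_filter A B R
    have hand : Multiset.filter (fun a => A a ∧ B a) R = 0 := by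
      rw [Multiset.filter_eq_nil]
      intro z _ hz
      obtain ⟨hzA, hzB⟩ := hz
      have : (1 - ε) ≤ (1 - ε)⁻¹ := by nlinarith
      simp only [hA] at hzA
      simp only [hB] at hzB
      linarith
    rw [hand, add_zero] at hsum
    have : Multiset.filter (fun a => A a ∨ B a) R =
        Multiset.filter A R + Multiset.filter B R := hsum.symm
    have h2 := congrArg Multiset.card this
    rw [Multiset.card_add] at h2
    convert h2 using 2
    exact Multiset.filter_congr fun _ _ => Iff.rfl
  -- final arithmetic
  have hn1 : (1:ℝ) ≤ (P.natDegree : ℝ) := by exact_mod_cast hd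
  have hnpos : (0:ℝ) < (P.natDegree : ℝ) := lt_of_lt_of_le one_pos hn1
  have hεn : (0:ℝ) < ε * (P.natDegree : ℝ) := mul_pos hε hnpos
  have hν : (outCount P ε : ℝ) * ε ≤ 2 * a - b := by
    rw [hcount]
    push_cast
    nlinarith
  have hrhs : 2 / (ε * (P.natDegree : ℝ)) * (a - 1 / 2 * b)
      = (2 * a - b) / (ε * (P.natDegree : ℝ)) := by ring
  rw [hrhs]
  have hlhs : (outCount P ε : ℝ) / (P.natDegree : ℝ)
      = ((outCount P ε : ℝ) * ε) / (ε * (P.natDegree : ℝ)) := by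
    field_simp
  rw [hlhs]
  exact (div_le_div_iff_of_pos_right hεn).mpr hν

lemma Titer_nonneg (β : ℝ) (j : ℕ) : 0 ≤ Titer β j := by
  cases j with
  | zero => exact zero_le_one
  | succ j => exact Int.fract_nonneg _

lemma tdigit_nonneg (β : ℝ) (hβ : 1 < β) (i : ℕ) : 0 ≤ tdigit β i := by
  cases i with
  | zero => exact le_refl 0
  | succ i =>
    show (0:ℤ) ≤ ⌊β * Titer β i⌋
    refine Int.le_floor.mpr ?_
    push_cast
    have h1 : 0 ≤ Titer β i := Titer_nonneg β i
    nlinarith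

lemma degree_tsum_lt (c : ℕ → ℤ) (m : ℕ) :
    (∑ i ∈ Finset.Icc 1 m, C (c i) * X ^ (m - i)).degree < (m : WithBot ℕ) := by
  refine lt_of_le_of_lt (Polynomial.degree_sum_le _ _) ?_
  refine (Finset.sup_lt_iff (WithBot.bot_lt_coe m)).mpr fun i hi => ?_
  refine lt_of_le_of_lt (Polynomial.degree_C_mul_X_pow_le _ _) ?_
  obtain ⟨h1, h2⟩ := Finset.mem_Icc.mp hi
  exact Nat.cast_lt.mpr (Nat.sub_lt (lt_of_lt_of_le Nat.zero_lt_one (h1.trans h2)) h1)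

lemma coeff0_tsum (c : ℕ → ℤ) (m : ℕ) (hm : 1 ≤ m) :
    (∑ i ∈ Finset.Icc 1 m, C (c i) * X ^ (m - i)).coeff 0 = c m := by
  rw [Polynomial.finset_sum_coeff]
  rw [Finset.sum_eq_single m]
  · rw [Nat.sub_self, pow_zero, mul_one, Polynomial.coeff_C]
    rfl
  · intro i hi hne
    have h1 : i < m := lt_of_le_of_ne (Finset.mem_Icc.mp hi).2 hne
    rw [Polynomial.coeff_C_mul, Polynomial.coeff_X_pow, if_neg (by omega), mul_zero]
  · intro h; exact absurd (Finset.mem_Icc.mpr ⟨hm, le_refl m⟩) h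

lemma simpleParry_props (β : ℝ) (m : ℕ) (hm : 1 ≤ m) (htm : tdigit β m ≠ 0) :
    (simpleParryPoly β m).Monic ∧ (simpleParryPoly β m).natDegree = m ∧
      (simpleParryPoly β m).coeff 0 ≠ 0 := by
  have hdeg := degree_tsum_lt (tdigit β) m
  have hdegX : (X ^ m : Polynomial ℤ).degree = (m : WithBot ℕ) := Polynomial.degree_X_pow m
  have hdeglt : (∑ i ∈ Finset.Icc 1 m, C (tdigit β i) * X ^ (m - i)).degree
      < (X ^ m : Polynomial ℤ).degree := by rw [hdegX]; exact hdeg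
  refine ⟨Polynomial.monic_X_pow_sub hdeg, ?_, ?_⟩
  · have : (simpleParryPoly β m).degree = (m : WithBot ℕ) := by
      rw [simpleParryPoly, Polynomial.degree_sub_eq_left_of_degree_lt hdeglt, hdegX]
    exact Polynomial.natDegree_eq_of_degree_eq_some this
  · rw [simpleParryPoly, Polynomial.coeff_sub, Polynomial.coeff_X_pow,
      if_neg (by omega), coeff0_tsum _ _ hm]
    simpa using htm

lemma nonsimpleParry_props (β : ℝ) (hβ : 1 < β) (m p : ℕ)
    (h1 : ∀ i, m + 1 ≤ i → tdigit β (i + (p + 1)) = tdigit β i)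
    (h3 : ∀ m', m' < m → ¬ (∀ i, m' + 1 ≤ i → tdigit β (i + (p + 1)) = tdigit β i)) :
    (nonsimpleParryPoly β m p).Monic ∧ (nonsimpleParryPoly β m p).natDegree = m + p + 1 ∧
      (nonsimpleParryPoly β m p).coeff 0 ≠ 0 := by
  set n := m + p + 1 with hn
  set S₁ := ∑ i ∈ Finset.Icc 1 n, C (tdigit β i) * X ^ (n - i) with hS₁
  set S₀ := ∑ i ∈ Finset.Icc 1 m, C (tdigit β i) * X ^ (m - i) with hS₀
  have hrw : nonsimpleParryPoly β m p = X ^ n - (S₁ + X ^ m - S₀) := by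
    rw [nonsimpleParryPoly, hS₁, hS₀, hn]; ring
  have hd1 : S₁.degree < (n : WithBot ℕ) := degree_tsum_lt _ _
  have hdX : (X ^ m : Polynomial ℤ).degree < (n : WithBot ℕ) := by
    rw [Polynomial.degree_X_pow]
    exact Nat.cast_lt.mpr (by omega)
  have hd0 : S₀.degree < (n : WithBot ℕ) :=
    lt_of_lt_of_le (degree_tsum_lt _ _) (Nat.cast_le.mpr (by omega))
  have hdeglt : (S₁ + X ^ m - S₀).degree < (n : WithBot ℕ) := by
    refine lt_of_le_of_lt (Polynomial.degree_sub_le _ _) (max_lt ?_ hd0)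
    exact lt_of_le_of_lt (Polynomial.degree_add_le _ _) (max_lt hd1 hdX)
  have hmono : (nonsimpleParryPoly β m p).Monic := by
    rw [hrw]; exact Polynomial.monic_X_pow_sub hdeglt
  have hdeg : (nonsimpleParryPoly β m p).natDegree = n := by
    apply Polynomial.natDegree_eq_of_degree_eq_some
    rw [hrw, Polynomial.degree_sub_eq_left_of_degree_lt
      (by rwa [Polynomial.degree_X_pow]), Polynomial.degree_X_pow]
  refine ⟨hmono, hdeg, ?_⟩
  have hcS₁ : S₁.coeff 0 = tdigit β n := coeff0_tsum _ _ (by omega)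
  rw [nonsimpleParryPoly]
  rw [Polynomial.coeff_add, Polynomial.coeff_sub, Polynomial.coeff_sub,
    Polynomial.coeff_X_pow, Polynomial.coeff_X_pow]
  rw [if_neg (by omega)]
  have hc1 : (∑ i ∈ Finset.Icc 1 (m + p + 1), C (tdigit β i) * X ^ (m + p + 1 - i)).coeff 0
      = tdigit β (m + p + 1) := coeff0_tsum _ _ (by omega)
  rw [hc1]
  rcases Nat.eq_zero_or_pos m with hm0 | hm1
  · subst hm0
    rw [if_pos rfl]
    simp only [Finset.Icc_self, zero_add]
    have ht : 0 ≤ tdigit β (p + 1) := tdigit_nonneg β hβ _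
    have : (∑ i ∈ Finset.Icc 1 0, C (tdigit β i) * X ^ (0 - i)).coeff 0 = 0 := by
      rw [show Finset.Icc 1 0 = (∅ : Finset ℕ) by rfl]
      simp
    rw [this]
    omega
  · rw [if_neg (by omega), coeff0_tsum _ _ hm1]
    have hne : tdigit β (m + p + 1) ≠ tdigit β m := by
      intro heq
      apply h3 (m - 1) (by omega)
      intro i hi
      rcases eq_or_lt_of_le hi with hEq | hLt
      · have him : i = m := by omega
        rw [him, show m + (p + 1) = m + p + 1 by omega, heq]
      · exact h1 i (by omega)
    omega

/-- The proportion `μ_ε` of roots of the Parry polynomial `n*_β` (with multiplicity)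
lying outside the annulus `1-ε ≤ |z| ≤ (1-ε)⁻¹` satisfies
`μ_ε ≤ (2/(ε·d_P))·(Log ‖n*_β‖₁ - (1/2)·Log |n*_β(0)|)`. -/
theorem parry_roots_annulus_norm1 (β : ℝ) (P : Polynomial ℤ) (hP : IsParryPolyOf β P)
    (ε : ℝ) (hε : 0 < ε) (hε1 : ε < 1) :
    (outCount P ε : ℝ) / (P.natDegree : ℝ) ≤
      2 / (ε * (P.natDegree : ℝ)) *
        (Real.log (polyNorm1 P) - (1 / 2) * Real.log |((P.coeff 0 : ℤ) : ℝ)|) := by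
  obtain ⟨hβ, -, hcase⟩ := hP
  have hprops : P.Monic ∧ 1 ≤ P.natDegree ∧ P.coeff 0 ≠ 0 := by
    rcases hcase with ⟨m, hm, htm, -, rfl⟩ | ⟨-, m, p, h1, -, h3, rfl⟩
    · obtain ⟨hmo, hdeg, hc0⟩ := simpleParry_props β m hm htm
      exact ⟨hmo, by omega, hc0⟩
    · obtain ⟨hmo, hdeg, hc0⟩ := nonsimpleParry_props β hβ m p h1 h3
      exact ⟨hmo, by omega, hc0⟩
  exact main_bound P hprops.1 hprops.2.1 hprops.2.2 ε hε hε1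

end
end

section
/- There exists an absolute constant C₀ > 0 such that for every Parry number β, the number s of distinct cyclotomic irreducible factors of the Parry polynomial n*_β (i.e. the number of positive integers n such that the n-th cyclotomic polynomial Φ_n divides n*_β) satisfies s ≤ C₀·√d_P, where d_P is the degree of n*_β. -/
open Polynomial

noncomputable section

namespace SchinzelAux
open Finset


def hfun (p : ℕ) : ℝ := ((1 - (p:ℝ)⁻¹)⁻¹)^2 - 1

def gfun (n : ℕ) : ℝ := ((n:ℝ) / (Nat.totient n : ℝ))^2

lemma gfun_nonneg (n : ℕ) : 0 ≤ gfun n := sq_nonneg _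

lemma one_sub_inv_pos {p : ℕ} (hp : 2 ≤ p) : 0 < 1 - (p:ℝ)⁻¹ := by
  have h2 : (2:ℝ) ≤ p := by exact_mod_cast hp
  have hp0 : (0:ℝ) < p := by linarith
  have : (p:ℝ)⁻¹ ≤ 2⁻¹ := by
    rw [inv_le_inv₀ hp0 (by norm_num)]
    exact h2
  linarith

lemma hfun_nonneg {p : ℕ} (hp : 2 ≤ p) : 0 ≤ hfun p := by
  have h1 := one_sub_inv_pos hp
  have h2 : 1 - (p:ℝ)⁻¹ ≤ 1 := by
    have : (0:ℝ) ≤ (p:ℝ)⁻¹ := by positivity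
    linarith
  have h3 : (1:ℝ) ≤ (1 - (p:ℝ)⁻¹)⁻¹ := by
    rw [le_inv_comm₀ one_pos h1]
    simpa using h2
  have : (1:ℝ) ≤ ((1 - (p:ℝ)⁻¹)⁻¹)^2 := by nlinarith
  unfold hfun; linarith

lemma totient_prod_real (n : ℕ) :
    (Nat.totient n : ℝ) = n * ∏ p ∈ n.primeFactors, (1 - (p:ℝ)⁻¹) := by
  have h := Nat.totient_eq_mul_prod_factors n
  have h2 := congrArg (fun q : ℚ => (q : ℝ)) h
  push_cast at h2
  convert h2 using 2







lemma gfun_eq {n : ℕ} (hn : 1 ≤ n) :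
    gfun n = ∏ p ∈ n.primeFactors, (1 + hfun p) := by
  have hn0 : (0:ℝ) < n := by exact_mod_cast hn
  have hpos : ∀ p ∈ n.primeFactors, (0:ℝ) < 1 - (p:ℝ)⁻¹ := fun p hp =>
    one_sub_inv_pos (Nat.prime_of_mem_primeFactors hp).two_le
  have hP : (0:ℝ) < ∏ p ∈ n.primeFactors, (1 - (p:ℝ)⁻¹) := prod_pos hpos
  have key : (n:ℝ) / (Nat.totient n : ℝ) = (∏ p ∈ n.primeFactors, (1 - (p:ℝ)⁻¹))⁻¹ := by
    rw [totient_prod_real]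
    rw [mul_comm, ← div_div, div_div_cancel_left' (ne_of_gt hn0)]
  unfold gfun
  rw [key, ← Finset.prod_inv_distrib, ← Finset.prod_pow]
  apply Finset.prod_congr rfl
  intro p hp
  unfold hfun
  ring

lemma powerset_expansion (a : ℕ → ℝ) (K : Finset ℕ) :
    ∏ p ∈ K, (1 + a p) = ∑ F ∈ K.powerset, ∏ p ∈ F, a p := by
  have h := Finset.prod_add a (fun _ => (1:ℝ)) K
  simp only [Finset.prod_const_one, mul_one] at h
  rw [← h]
  apply Finset.prod_congr rfl
  intro p _
  ring

lemma gfun_expand {n : ℕ} (hn : 1 ≤ n) :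
    gfun n = ∑ F ∈ n.primeFactors.powerset, ∏ p ∈ F, hfun p := by
  rw [gfun_eq hn, powerset_expansion]

lemma card_multiples_le (N d : ℕ) :
    ((({n ∈ Finset.Icc 1 N | d ∣ n}).card : ℝ)) ≤ (N:ℝ) / (d:ℝ) := by
  have he : Finset.Icc 1 N = Finset.Ioc 0 N := rfl
  rw [he, Nat.Ioc_filter_dvd_card_eq_div]
  exact Nat.cast_div_le





lemma hfun_two : hfun 2 = 3 := by
  unfold hfun
  norm_num

lemma hfun_div_le {p : ℕ} (h3 : 3 ≤ p) :
    hfun p / p ≤ 2 / (((p:ℝ) - 1) * ((p:ℝ) - 2)) := by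
  have hq : (3:ℝ) ≤ (p:ℝ) := by exact_mod_cast h3
  have h0 : (0:ℝ) < p := by linarith
  have h1 : (0:ℝ) < (p:ℝ) - 1 := by linarith
  have h2 : (0:ℝ) < (p:ℝ) - 2 := by linarith
  have hinv : (1 - (p:ℝ)⁻¹)⁻¹ = (p:ℝ) / ((p:ℝ) - 1) := by
    rw [inv_eq_iff_eq_inv]
    field_simp
  unfold hfun
  rw [hinv, div_pow, div_le_div_iff₀ (by positivity) (by positivity)]
  have expand : ((p:ℝ)^2 / ((p:ℝ)-1)^2 - 1) = (2*(p:ℝ) - 1)/((p:ℝ)-1)^2 := by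
    field_simp
    ring
  rw [expand, div_mul_eq_mul_div, div_le_iff₀ (by positivity)]
  nlinarith

lemma tele : ∀ M : ℕ, 2 ≤ M →
    ∑ m ∈ Finset.Icc 3 M, (2:ℝ)/(((m:ℝ)-1)*((m:ℝ)-2)) ≤ 2 - 2/((M:ℝ)-1) := by
  intro M hM
  induction M, hM using Nat.le_induction with
  | base => norm_num
  | succ M hM ih =>
    rw [Finset.sum_Icc_succ_top (by omega : 3 ≤ M + 1)]
    have hMr : (2:ℝ) ≤ (M:ℝ) := by exact_mod_cast hM
    have h1 : (0:ℝ) < (M:ℝ) - 1 := by linarith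
    have h0 : (0:ℝ) < (M:ℝ) := by linarith
    have hc : ((M+1:ℕ):ℝ) = (M:ℝ)+1 := by push_cast; ring
    rw [hc]
    have e1 : (((M:ℝ)+1)-1) = (M:ℝ) := by ring
    have e2 : (((M:ℝ)+1)-2) = (M:ℝ)-1 := by ring
    rw [e1, e2]
    have key2 : (2:ℝ)/((M:ℝ)*((M:ℝ)-1)) = 2/((M:ℝ)-1) - 2/(M:ℝ) := by
      rw [div_sub_div _ _ (ne_of_gt h1) (ne_of_gt h0),
        show (2:ℝ)*(M:ℝ) - ((M:ℝ)-1)*2 = 2 by ring,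
        show ((M:ℝ)-1)*(M:ℝ) = (M:ℝ)*((M:ℝ)-1) by ring]
    linarith

lemma prod_bound (K : Finset ℕ) (hK : ∀ p ∈ K, p.Prime) :
    ∏ p ∈ K, (1 + hfun p / p) ≤ 19 := by
  classical
  have hterm : ∀ p ∈ K, (0:ℝ) ≤ 1 + hfun p / p := by
    intro p hp
    have hh := hfun_nonneg (hK p hp).two_le
    have hp0 : (0:ℝ) < p := by exact_mod_cast (hK p hp).pos
    have := div_nonneg hh (le_of_lt hp0)
    linarith
  have hodd3 : ∀ p ∈ K.erase 2, 3 ≤ p := by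
    intro p hp
    have hpp := hK p (Finset.mem_of_mem_erase hp)
    have hne := Finset.ne_of_mem_erase hp
    have := hpp.two_le
    omega
  -- bound the product over K.erase 2
  have hexp : ∏ p ∈ K.erase 2, (1 + hfun p / p) ≤ Real.exp 2 := by
    calc ∏ p ∈ K.erase 2, (1 + hfun p / p)
        ≤ ∏ p ∈ K.erase 2, Real.exp (2/(((p:ℝ)-1)*((p:ℝ)-2))) := by
          apply Finset.prod_le_prod
          · intro p hp; exact hterm p (Finset.mem_of_mem_erase hp)
          · intro p hp
            have h := hfun_div_le (hodd3 p hp)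
            calc 1 + hfun p / p ≤ 1 + 2/(((p:ℝ)-1)*((p:ℝ)-2)) := by linarith
              _ ≤ Real.exp (2/(((p:ℝ)-1)*((p:ℝ)-2))) := by
                  have := Real.add_one_le_exp (2/(((p:ℝ)-1)*((p:ℝ)-2)))
                  linarith
      _ = Real.exp (∑ p ∈ K.erase 2, 2/(((p:ℝ)-1)*((p:ℝ)-2))) := (Real.exp_sum _ _).symm
      _ ≤ Real.exp 2 := by
          apply Real.exp_le_exp.mpr
          set M := (K.sup id) ⊔ 2 with hMdef
          have hsub : K.erase 2 ⊆ Finset.Icc 3 M := by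
            intro p hp
            rw [Finset.mem_Icc]
            refine ⟨hodd3 p hp, ?_⟩
            calc p = id p := rfl
              _ ≤ K.sup id := Finset.le_sup (Finset.mem_of_mem_erase hp)
              _ ≤ M := le_sup_left
          have hM2 : 2 ≤ M := le_sup_right
          calc ∑ p ∈ K.erase 2, 2/(((p:ℝ)-1)*((p:ℝ)-2))
              ≤ ∑ m ∈ Finset.Icc 3 M, 2/(((m:ℝ)-1)*((m:ℝ)-2)) := by
                apply Finset.sum_le_sum_of_subset_of_nonneg hsub
                intro m hm _
                have h3 : 3 ≤ m := (Finset.mem_Icc.mp hm).1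
                have : (3:ℝ) ≤ (m:ℝ) := by exact_mod_cast h3
                have h1m : (0:ℝ) < (m:ℝ)-1 := by linarith
                have h2m : (0:ℝ) < (m:ℝ)-2 := by linarith
                positivity
            _ ≤ 2 - 2/((M:ℝ)-1) := tele M hM2
            _ ≤ 2 := by
                have : (2:ℝ) ≤ (M:ℝ) := by exact_mod_cast hM2
                have h1 : (0:ℝ) < (M:ℝ)-1 := by linarith
                have : (0:ℝ) ≤ 2/((M:ℝ)-1) := by positivity
                linarith
  have hexp2 : Real.exp 2 ≤ 7.39 := by
    have h1 := Real.exp_one_lt_d9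
    have h2 : Real.exp 2 = Real.exp 1 * Real.exp 1 := by
      rw [← Real.exp_add]; norm_num
    have hp := Real.exp_pos 1
    nlinarith
  have hprodnn : (0:ℝ) ≤ ∏ p ∈ K.erase 2, (1 + hfun p / p) :=
    Finset.prod_nonneg (fun p hp => hterm p (Finset.mem_of_mem_erase hp))
  by_cases h2 : 2 ∈ K
  · rw [← Finset.mul_prod_erase K _ h2, hfun_two]
    have : (1:ℝ) + 3/(2:ℕ) = 5/2 := by norm_num
    rw [this]
    nlinarith
  · rw [← Finset.erase_eq_of_notMem h2]
    nlinarith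






lemma sumg (N : ℕ) : ∑ n ∈ Finset.Icc 1 N, gfun n ≤ 19 * N := by
  classical
  set K := (N+1).primesBelow with hKdef
  have hKprime : ∀ p ∈ K, p.Prime := fun p hp => (Nat.mem_primesBelow.mp hp).2
  have step1 : ∀ n ∈ Finset.Icc 1 N, gfun n =
      ∑ F ∈ K.powerset, if F ⊆ n.primeFactors then ∏ p ∈ F, hfun p else 0 := by
    intro n hn
    obtain ⟨hn1, hnN⟩ := Finset.mem_Icc.mp hn
    rw [gfun_expand hn1]
    have hsub : n.primeFactors.powerset ⊆ K.powerset := by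
      apply Finset.powerset_mono.mpr
      intro p hp
      rw [Nat.mem_primesBelow]
      exact ⟨lt_of_le_of_lt (Nat.le_of_dvd (by omega) (Nat.dvd_of_mem_primeFactors hp))
        (Nat.lt_succ_of_le hnN), Nat.prime_of_mem_primeFactors hp⟩
    rw [Finset.sum_congr rfl (fun F hF => ?_), Finset.sum_subset hsub (fun F _ hF => ?_)]
    · rw [if_neg]
      intro hc
      exact hF (Finset.mem_powerset.mpr hc)
    · rw [if_pos (Finset.mem_powerset.mp hF)]
  rw [Finset.sum_congr rfl step1, Finset.sum_comm]
  have step2 : ∀ F ∈ K.powerset,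
      (∑ n ∈ Finset.Icc 1 N, if F ⊆ n.primeFactors then ∏ p ∈ F, hfun p else 0)
        ≤ (N:ℝ) * ∏ p ∈ F, (hfun p / p) := by
    intro F hF
    have hFp : ∀ p ∈ F, p.Prime := fun p hp => hKprime p (Finset.mem_powerset.mp hF hp)
    have hW : 0 ≤ ∏ p ∈ F, hfun p :=
      Finset.prod_nonneg fun p hp => hfun_nonneg (hFp p hp).two_le
    have hrw : (∑ n ∈ Finset.Icc 1 N, if F ⊆ n.primeFactors then ∏ p ∈ F, hfun p else 0)
        = (({n ∈ Finset.Icc 1 N | F ⊆ n.primeFactors}).card : ℝ) * ∏ p ∈ F, hfun p := by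
      rw [← Finset.sum_filter, Finset.sum_const, nsmul_eq_mul]
    rw [hrw]
    have hsubset : {n ∈ Finset.Icc 1 N | F ⊆ n.primeFactors}
        ⊆ {n ∈ Finset.Icc 1 N | (∏ p ∈ F, p) ∣ n} := by
      intro n hn
      rw [Finset.mem_filter] at hn ⊢
      refine ⟨hn.1, Finset.prod_primes_dvd n (fun p hp => (hFp p hp).prime)
        (fun p hp => Nat.dvd_of_mem_primeFactors (hn.2 hp))⟩
    have hcard : ((({n ∈ Finset.Icc 1 N | F ⊆ n.primeFactors}).card : ℝ))
        ≤ (N:ℝ) / ((∏ p ∈ F, p : ℕ) : ℝ) :=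
      le_trans (by exact_mod_cast Finset.card_le_card hsubset) (card_multiples_le N _)
    calc (({n ∈ Finset.Icc 1 N | F ⊆ n.primeFactors}).card : ℝ) * ∏ p ∈ F, hfun p
        ≤ ((N:ℝ) / ((∏ p ∈ F, p : ℕ) : ℝ)) * ∏ p ∈ F, hfun p :=
          mul_le_mul_of_nonneg_right hcard hW
      _ = (N:ℝ) * ∏ p ∈ F, (hfun p / p) := by
          rw [Finset.prod_div_distrib, Nat.cast_prod]
          ring
  calc ∑ F ∈ K.powerset, ∑ n ∈ Finset.Icc 1 N,
        (if F ⊆ n.primeFactors then ∏ p ∈ F, hfun p else 0)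
      ≤ ∑ F ∈ K.powerset, (N:ℝ) * ∏ p ∈ F, (hfun p / p) := Finset.sum_le_sum step2
    _ = (N:ℝ) * ∑ F ∈ K.powerset, ∏ p ∈ F, (hfun p / p) := by rw [Finset.mul_sum]
    _ = (N:ℝ) * ∏ p ∈ K, (1 + hfun p / p) := by rw [powerset_expansion]
    _ ≤ 19 * N := by
        have h19 := prod_bound K hKprime
        have hN0 : (0:ℝ) ≤ N := Nat.cast_nonneg N
        nlinarith





lemma abel_key (M : ℕ) (hM : 1 ≤ M) : ∀ N, M ≤ N →
    ∑ n ∈ Finset.Ioc M N, gfun n / ((n:ℝ) * ((n:ℝ)+1))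
      ≤ 38/((M:ℝ)+1) - 19/((N:ℝ)+1)
        - (19*(N:ℝ) - ∑ n ∈ Finset.Icc 1 N, gfun n) / (((N:ℝ)+1)*((N:ℝ)+2)) := by
  intro N hMN
  induction N, hMN using Nat.le_induction with
  | base =>
    rw [Finset.Ioc_self, Finset.sum_empty]
    have hG0 : (0:ℝ) ≤ ∑ n ∈ Finset.Icc 1 M, gfun n :=
      Finset.sum_nonneg fun n _ => gfun_nonneg n
    have hx : (1:ℝ) ≤ (M:ℝ) := by exact_mod_cast hM
    have h1 : (0:ℝ) < (M:ℝ)+1 := by linarith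
    have h2 : (0:ℝ) < (M:ℝ)+2 := by linarith
    have hstep : (19*(M:ℝ) - ∑ n ∈ Finset.Icc 1 M, gfun n) / (((M:ℝ)+1)*((M:ℝ)+2))
        ≤ 19*(M:ℝ)/(((M:ℝ)+1)*((M:ℝ)+2)) := by
      gcongr
      linarith
    have hstep2 : 19*(M:ℝ)/(((M:ℝ)+1)*((M:ℝ)+2)) ≤ 19/((M:ℝ)+1) := by
      rw [div_le_div_iff₀ (by positivity) (by positivity)]
      nlinarith
    have h38 : (38:ℝ)/((M:ℝ)+1) = 2*(19/((M:ℝ)+1)) := by ring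
    linarith
  | succ N hN ih =>
    have hx : (1:ℝ) ≤ (N:ℝ) := by
      have : 1 ≤ N := le_trans hM hN
      exact_mod_cast this
    rw [Finset.sum_Ioc_succ_top hN, Finset.sum_Icc_succ_top (by omega : 1 ≤ N+1)]
    set G := ∑ n ∈ Finset.Icc 1 N, gfun n with hGdef
    set g1 := gfun (N+1) with hg1def
    have hg1 : 0 ≤ g1 := gfun_nonneg _
    have hG19 : G ≤ 19*(N:ℝ) := by
      have := sumg N
      linarith
    have hG19' : G + g1 ≤ 19*((N:ℝ)+1) := by
      have h := sumg (N+1)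
      rw [Finset.sum_Icc_succ_top (by omega : 1 ≤ N+1)] at h
      push_cast at h
      linarith
    push_cast
    rw [show ((N:ℝ)+1+1) = (N:ℝ)+2 by ring, show ((N:ℝ)+1+2) = (N:ℝ)+3 by ring]
    have h1 : (0:ℝ) < (N:ℝ)+1 := by linarith
    have h2 : (0:ℝ) < (N:ℝ)+2 := by linarith
    have h3 : (0:ℝ) < (N:ℝ)+3 := by linarith
    have heq : -(19/((N:ℝ)+1)) - (19*(N:ℝ)-G)/(((N:ℝ)+1)*((N:ℝ)+2))
          + g1/(((N:ℝ)+1)*((N:ℝ)+2))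
        = -(19/((N:ℝ)+2)) - (19*((N:ℝ)+1)-(G+g1))/(((N:ℝ)+1)*((N:ℝ)+2)) := by
      field_simp
      ring
    have hmono : (19*((N:ℝ)+1)-(G+g1))/(((N:ℝ)+2)*((N:ℝ)+3))
        ≤ (19*((N:ℝ)+1)-(G+g1))/(((N:ℝ)+1)*((N:ℝ)+2)) := by
      apply div_le_div_of_nonneg_left (by linarith) (by positivity)
      nlinarith
    have := ih
    linarith




lemma abel (M : ℕ) (hM : 1 ≤ M) (N : ℕ) :
    ∑ n ∈ Finset.Ioc M N, gfun n / ((n:ℝ) * ((n:ℝ)+1)) ≤ 38/((M:ℝ)+1) := by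
  rcases le_or_gt M N with h | h
  · have hk := abel_key M hM N h
    have h1 : (0:ℝ) < (N:ℝ)+1 := by positivity
    have h2 : (0:ℝ) < (N:ℝ)+2 := by positivity
    have hD : 0 ≤ (19*(N:ℝ) - ∑ n ∈ Finset.Icc 1 N, gfun n) := by
      have := sumg N; linarith
    have ht1 : 0 ≤ (19:ℝ)/((N:ℝ)+1) := by positivity
    have ht2 : 0 ≤ (19*(N:ℝ) - ∑ n ∈ Finset.Icc 1 N, gfun n) / (((N:ℝ)+1)*((N:ℝ)+2)) := by
      positivity
    linarith
  · rw [Finset.Ioc_eq_empty (by omega), Finset.sum_empty]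
    positivity

lemma count (S : Finset ℕ) (h1 : ∀ n ∈ S, 1 ≤ n) (d : ℕ) (hd : 1 ≤ d)
    (hsum : ∑ n ∈ S, Nat.totient n ≤ d) : (S.card : ℝ) ≤ 79 * Real.sqrt d := by
  classical
  set T : ℝ := Real.sqrt d with hTdef
  have hT1 : 1 ≤ T := Real.one_le_sqrt.mpr (by exact_mod_cast hd)
  have hT0 : 0 < T := by linarith
  have hT2 : T^2 = d := Real.sq_sqrt (by positivity)
  set S₁ := {n ∈ S | (Nat.totient n : ℝ) ≤ T} with hS₁
  set S₂ := {n ∈ S | ¬ ((Nat.totient n : ℝ) ≤ T)} with hS₂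
  have hsplit : S₁.card + S₂.card = S.card :=
    Finset.card_filter_add_card_filter_not _
  -- S₂ bound
  have hS₂card : (S₂.card : ℝ) ≤ T := by
    have hlb : (S₂.card : ℝ) * T ≤ ∑ n ∈ S₂, (Nat.totient n : ℝ) := by
      calc (S₂.card : ℝ) * T = ∑ _n ∈ S₂, T := by rw [Finset.sum_const, nsmul_eq_mul]
        _ ≤ ∑ n ∈ S₂, (Nat.totient n : ℝ) := by
            apply Finset.sum_le_sum
            intro n hn
            have := (Finset.mem_filter.mp hn).2
            linarith [not_le.mp this]
    have hub : ∑ n ∈ S₂, (Nat.totient n : ℝ) ≤ (d:ℝ) := by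
      have h0 : ∑ n ∈ S₂, Nat.totient n ≤ d :=
        le_trans (Finset.sum_le_sum_of_subset (Finset.filter_subset _ _)) hsum
      exact_mod_cast h0
    have : (S₂.card : ℝ) * T ≤ T^2 := by rw [hT2]; linarith
    nlinarith
  -- S₁ bound
  set M := ⌈T⌉₊ with hMdef
  have hM1 : 1 ≤ M := by
    rw [hMdef]
    exact Nat.one_le_ceil_iff.mpr hT0
  have hTM : T ≤ (M:ℝ) := Nat.le_ceil T
  have hMT : (M:ℝ) ≤ T + 1 := le_of_lt (Nat.ceil_lt_add_one (le_of_lt hT0))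
  set S₁a := {n ∈ S₁ | n ≤ M} with hS₁a
  set S₁b := {n ∈ S₁ | ¬ (n ≤ M)} with hS₁b
  have hsplit1 : S₁a.card + S₁b.card = S₁.card :=
    Finset.card_filter_add_card_filter_not _
  have hS₁acard : (S₁a.card : ℝ) ≤ 2*T := by
    have hsub : S₁a ⊆ Finset.Icc 1 M := by
      intro n hn
      have hn1 := h1 n (Finset.filter_subset _ _ ((Finset.filter_subset _ _) hn))
      have hn2 := (Finset.mem_filter.mp hn).2
      exact Finset.mem_Icc.mpr ⟨hn1, hn2⟩
    have := Finset.card_le_card hsub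
    have hcard : (S₁a.card : ℝ) ≤ (M:ℝ) := by
      rw [Nat.card_Icc] at this
      exact_mod_cast le_trans this (by omega : M + 1 - 1 ≤ M)
    linarith
  set N := M ⊔ S.sup id with hNdef
  have hS₁bcard : (S₁b.card : ℝ) ≤ 76 * T := by
    have hterm : ∀ n ∈ S₁b, (1:ℝ) ≤ 2*T^2 * (gfun n / ((n:ℝ)*((n:ℝ)+1))) := by
      intro n hn
      have hnS₁ := (Finset.filter_subset _ _) hn
      have hφT : (Nat.totient n : ℝ) ≤ T := (Finset.mem_filter.mp hnS₁).2
      have hnM : M < n := by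
        have := (Finset.mem_filter.mp hn).2
        omega
      have hn1 : 1 ≤ n := h1 n ((Finset.filter_subset _ _) hnS₁)
      have hφpos : 0 < Nat.totient n := Nat.totient_pos.mpr (by omega)
      have hφposR : (0:ℝ) < (Nat.totient n : ℝ) := by exact_mod_cast hφpos
      have hnR : (1:ℝ) ≤ (n:ℝ) := by exact_mod_cast hn1
      have hgf : (n:ℝ)^2 / T^2 ≤ gfun n := by
        unfold gfun
        rw [div_pow]
        apply div_le_div_of_nonneg_left (by positivity) (by positivity)
        nlinarith
      have hkey : 2*(n:ℝ)/((n:ℝ)+1) ≤ 2*T^2 * (gfun n / ((n:ℝ)*((n:ℝ)+1))) := by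
        have hmul : 2*T^2 * (((n:ℝ)^2/T^2) / ((n:ℝ)*((n:ℝ)+1))) = 2*(n:ℝ)/((n:ℝ)+1) := by
          field_simp
        rw [← hmul]
        apply mul_le_mul_of_nonneg_left _ (by positivity)
        apply div_le_div_of_nonneg_right hgf (by positivity)
      have : (1:ℝ) ≤ 2*(n:ℝ)/((n:ℝ)+1) := by
        rw [le_div_iff₀ (by positivity)]
        linarith
      linarith
    have hsub : S₁b ⊆ Finset.Ioc M N := by
      intro n hn
      have hnM : M < n := by
        have := (Finset.mem_filter.mp hn).2
        omega
      have hnN : n ≤ N := by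
        have hnS : n ∈ S := (Finset.filter_subset _ _) ((Finset.filter_subset _ _) hn)
        calc n = id n := rfl
          _ ≤ S.sup id := Finset.le_sup hnS
          _ ≤ N := le_sup_right
      exact Finset.mem_Ioc.mpr ⟨hnM, hnN⟩
    calc (S₁b.card : ℝ) = ∑ _n ∈ S₁b, (1:ℝ) := by rw [Finset.sum_const, nsmul_eq_mul, mul_one]
      _ ≤ ∑ n ∈ S₁b, 2*T^2 * (gfun n / ((n:ℝ)*((n:ℝ)+1))) := Finset.sum_le_sum hterm
      _ = 2*T^2 * ∑ n ∈ S₁b, gfun n / ((n:ℝ)*((n:ℝ)+1)) := by rw [Finset.mul_sum]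
      _ ≤ 2*T^2 * ∑ n ∈ Finset.Ioc M N, gfun n / ((n:ℝ)*((n:ℝ)+1)) := by
          apply mul_le_mul_of_nonneg_left _ (by positivity)
          apply Finset.sum_le_sum_of_subset_of_nonneg hsub
          intro n hn _
          have h0 : (0:ℝ) < (n:ℝ) := by
            have := (Finset.mem_Ioc.mp hn).1
            have : 1 ≤ n := by omega
            exact_mod_cast this
          have := gfun_nonneg n
          positivity
      _ ≤ 2*T^2 * (38/((M:ℝ)+1)) := by
          apply mul_le_mul_of_nonneg_left (abel M hM1 N) (by positivity)
      _ ≤ 76 * T := by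
          have hM1R : T ≤ (M:ℝ) + 1 := by linarith
          have hpos : (0:ℝ) < (M:ℝ)+1 := by positivity
          rw [div_eq_mul_inv]
          have : 2*T^2*(38*((M:ℝ)+1)⁻¹) = 76*(T^2/((M:ℝ)+1)) := by ring
          rw [this]
          have hfrac : T^2/((M:ℝ)+1) ≤ T := by
            rw [div_le_iff₀ hpos]
            nlinarith
          linarith
  have : (S.card : ℝ) = (S₁a.card : ℝ) + (S₁b.card : ℝ) + (S₂.card : ℝ) := by
    push_cast [← hsplit, ← hsplit1]
    ring
  rw [this]
  have : (79:ℝ) * T = 2*T + 76*T + T := by ring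
  rw [hTdef] at *
  linarith



lemma deg_sum_lt (β : ℝ) (a : ℕ) (K : ℕ) (h : a ≤ K) (hK : 0 < K) :
    (∑ i ∈ Finset.Icc 1 a, C (tdigit β i) * X ^ (a - i)).degree < (K : WithBot ℕ) := by
  apply lt_of_le_of_lt (Polynomial.degree_sum_le _ _)
  rw [Finset.sup_lt_iff (by exact_mod_cast WithBot.bot_lt_coe K)]
  intro i hi
  apply lt_of_le_of_lt (Polynomial.degree_C_mul_X_pow_le _ _)
  have hi1 : 1 ≤ i := (Finset.mem_Icc.mp hi).1
  have : a - i < K := by omega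
  exact_mod_cast this

lemma parry_spec {β : ℝ} {P : Polynomial ℤ} (h : IsParryPolyOf β P) :
    P.Monic ∧ 1 ≤ P.natDegree := by
  obtain ⟨-, -, hcase | hcase⟩ := h
  · obtain ⟨m, hm1, -, -, rfl⟩ := hcase
    unfold simpleParryPoly
    have hdeg := deg_sum_lt β m m le_rfl (by omega)
    constructor
    · exact Polynomial.monic_X_pow_sub hdeg
    · have hd : (X ^ m - ∑ i ∈ Finset.Icc 1 m, C (tdigit β i) * X ^ (m - i)).degree
          = (m : WithBot ℕ) := by
        rw [Polynomial.degree_sub_eq_left_of_degree_lt (by rwa [Polynomial.degree_X_pow]),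
          Polynomial.degree_X_pow]
      have := Polynomial.natDegree_eq_of_degree_eq_some hd
      omega
  · obtain ⟨-, m, p, -, -, -, rfl⟩ := hcase
    have hrw : nonsimpleParryPoly β m p
        = X ^ (m + p + 1) - ((∑ i ∈ Finset.Icc 1 (m + p + 1), C (tdigit β i) * X ^ (m + p + 1 - i))
            + X ^ m - ∑ i ∈ Finset.Icc 1 m, C (tdigit β i) * X ^ (m - i)) := by
      unfold nonsimpleParryPoly
      ring
    have hdeg : ((∑ i ∈ Finset.Icc 1 (m + p + 1), C (tdigit β i) * X ^ (m + p + 1 - i))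
            + X ^ m - ∑ i ∈ Finset.Icc 1 m, C (tdigit β i) * X ^ (m - i)).degree
          < ((m + p + 1 : ℕ) : WithBot ℕ) := by
      apply lt_of_le_of_lt (Polynomial.degree_sub_le _ _)
      rw [max_lt_iff]
      constructor
      · apply lt_of_le_of_lt (Polynomial.degree_add_le _ _)
        rw [max_lt_iff]
        constructor
        · exact deg_sum_lt β (m+p+1) (m+p+1) le_rfl (by omega)
        · rw [Polynomial.degree_X_pow]
          exact_mod_cast (by omega : m < m + p + 1)
      · exact deg_sum_lt β m (m+p+1) (by omega) (by omega)
    rw [hrw]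
    constructor
    · exact Polynomial.monic_X_pow_sub hdeg
    · have hd : (X ^ (m + p + 1) -
          ((∑ i ∈ Finset.Icc 1 (m + p + 1), C (tdigit β i) * X ^ (m + p + 1 - i))
            + X ^ m - ∑ i ∈ Finset.Icc 1 m, C (tdigit β i) * X ^ (m - i))).degree
          = ((m + p + 1 : ℕ) : WithBot ℕ) := by
        rw [Polynomial.degree_sub_eq_left_of_degree_lt (by rwa [Polynomial.degree_X_pow]),
          Polynomial.degree_X_pow]
      have := Polynomial.natDegree_eq_of_degree_eq_some hd
      omega

lemma totient_sum_le (P : Polynomial ℤ) (hP : P.Monic) (F : Finset ℕ)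
    (hF : ∀ n ∈ F, 1 ≤ n ∧ cyclotomic n ℤ ∣ P) :
    ∑ n ∈ F, Nat.totient n ≤ P.natDegree := by
  have hPQ : (P.map (Int.castRingHom ℚ)).Monic := hP.map _
  have hPQ0 : P.map (Int.castRingHom ℚ) ≠ 0 := hPQ.ne_zero
  have hdvd : (∏ n ∈ F, cyclotomic n ℚ) ∣ P.map (Int.castRingHom ℚ) := by
    apply Finset.prod_dvd_of_coprime
    · intro a ha b hb hab
      exact cyclotomic.isCoprime_rat hab
    · intro n hn
      have hd := Polynomial.map_dvd (Int.castRingHom ℚ) (hF n hn).2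
      rwa [map_cyclotomic] at hd
  have hdeg := Polynomial.natDegree_le_of_dvd hdvd hPQ0
  rw [Polynomial.natDegree_prod _ _ (fun n _ => cyclotomic_ne_zero n ℚ)] at hdeg
  simp only [natDegree_cyclotomic] at hdeg
  rwa [hP.natDegree_map] at hdeg

end SchinzelAux

/-- There is an absolute constant `C₀ > 0` such that for every Parry number `β`, the
number `s` of distinct cyclotomic irreducible factors of the Parry polynomial `n*_β`
satisfies `s ≤ C₀·√d_P`. -/
theorem schinzel_cyclotomic_factors :
    ∃ C₀ : ℝ, 0 < C₀ ∧ ∀ (β : ℝ) (P : Polynomial ℤ), IsParryPolyOf β P →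
      ((Set.ncard {n : ℕ | 1 ≤ n ∧ Polynomial.cyclotomic n ℤ ∣ P}) : ℝ) ≤
        C₀ * Real.sqrt (P.natDegree : ℝ) := by
  classical
  refine ⟨79, by norm_num, ?_⟩
  intro β P hP
  obtain ⟨hmonic, hdeg⟩ := SchinzelAux.parry_spec hP
  set Sset := {n : ℕ | 1 ≤ n ∧ Polynomial.cyclotomic n ℤ ∣ P} with hSset
  have hkey : ∀ F : Finset ℕ, (↑F ⊆ Sset) → ∑ n ∈ F, Nat.totient n ≤ P.natDegree := by
    intro F hF
    exact SchinzelAux.totient_sum_le P hmonic F (fun n hn => hF hn)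
  have hfin : Sset.Finite := by
    by_contra hinf
    obtain ⟨F, hFs, hFcard⟩ :=
      (Set.Infinite.exists_subset_card_eq hinf (P.natDegree + 1))
    have h1 : F.card ≤ ∑ n ∈ F, Nat.totient n := by
      calc F.card = ∑ _n ∈ F, 1 := by simp
        _ ≤ ∑ n ∈ F, Nat.totient n := Finset.sum_le_sum fun n hn =>
            Nat.totient_pos.mpr (by have := (hFs hn).1; omega)
    have h2 := hkey F hFs
    omega
  have hncard : Sset.ncard = hfin.toFinset.card := Set.ncard_eq_toFinset_card Sset hfin
  rw [hncard]
  exact SchinzelAux.count hfin.toFinset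
    (fun n hn => (hfin.mem_toFinset.mp hn).1) P.natDegree hdeg
    (hkey hfin.toFinset (by simp [Set.Finite.coe_toFinset]))


end
end
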